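/- arXiv:1702.04233 — 2 statements merged into one kernel-verified Lean document; each statement's English description precedes it below -/
import Mathlib

section
/- For p = 2, the Hardy–Hodge decomposition f = f⁺ + f⁻ + f⁰ of a para-vector valued f ∈ L²(ℝ^n, Cl(n,ℝ)) satisfies the Pythagorean identity ‖f‖² = ‖f⁺‖² + ‖f⁻‖² + ‖f⁰‖². -/
/-!
Expand every square. The cross terms between the three parts cancel because the Riesz
transforms are skew-adjoint: `Σ_k ⟪R_k φ⁺, R_k φ⁻⟫ = -⟪φ⁺, Σ_k R_k² φ⁻⟫ = ⟪φ⁺, φ⁻⟫` cancels the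
cross term of `‖φ⁺ + φ⁻‖²`, and `Σ_k ⟪R_k φ, f⁰_k⟫ = -⟪φ, Σ_k R_k f⁰_k⟫ = 0` since `f⁰` is
divergence free.
-/

open MeasureTheory
open scoped RealInnerProductSpace

section SkewFamily

variable {ι E : Type*} [Fintype ι] [NormedAddCommGroup E] [InnerProductSpace ℝ E]
  {R : ι → E →L[ℝ] E}

theorem sum_inner_apply_eq_neg_inner_sum (hskew : ∀ k x y, ⟪R k x, y⟫ = -⟪x, R k y⟫)
    (x : E) (v : ι → E) : ∑ k, ⟪R k x, v k⟫ = -⟪x, ∑ k, R k (v k)⟫ := by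
  simp only [hskew, Finset.sum_neg_distrib, inner_sum]

theorem sum_inner_apply_apply (hskew : ∀ k x y, ⟪R k x, y⟫ = -⟪x, R k y⟫)
    (hsq : ∀ x, ∑ k, R k (R k x) = -x) (x y : E) : ∑ k, ⟪R k x, R k y⟫ = ⟪x, y⟫ := by
  rw [sum_inner_apply_eq_neg_inner_sum hskew, hsq, inner_neg_right, neg_neg]

theorem sum_inner_apply_eq_zero (hskew : ∀ k x y, ⟪R k x, y⟫ = -⟪x, R k y⟫)
    {v : ι → E} (hdiv : ∑ k, R k (v k) = 0) (x : E) : ∑ k, ⟪R k x, v k⟫ = 0 := by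
  rw [sum_inner_apply_eq_neg_inner_sum hskew, hdiv, inner_zero_right, neg_zero]

end SkewFamily

theorem norm_neg_add_add_sq_real {E : Type*} [NormedAddCommGroup E] [InnerProductSpace ℝ E]
    (a b c : E) :
    ‖-a + b + c‖ ^ 2 =
      ‖a‖ ^ 2 + ‖b‖ ^ 2 + ‖c‖ ^ 2 - 2 * ⟪a, b⟫ - 2 * ⟪a, c⟫ + 2 * ⟪b, c⟫ := by
  rw [norm_add_sq_real, norm_add_sq_real, inner_add_left, inner_neg_left, inner_neg_left,
    norm_neg]
  ring

theorem hardy_hodge_pythagoras_general (n : ℕ)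
    (R : Fin n →
      (Lp ℝ 2 (volume : Measure (Fin n → ℝ))) →L[ℝ]
        (Lp ℝ 2 (volume : Measure (Fin n → ℝ))))
    (hsq : ∀ g, ∑ k : Fin n, R k (R k g) = -g)
    (hskew : ∀ (k : Fin n) (g h : Lp ℝ 2 (volume : Measure (Fin n → ℝ))),
      ⟪R k g, h⟫ = -⟪g, R k h⟫)
    (f0 : Lp ℝ 2 (volume : Measure (Fin n → ℝ)))
    (fv : Fin n → Lp ℝ 2 (volume : Measure (Fin n → ℝ)))
    (φp φm : Lp ℝ 2 (volume : Measure (Fin n → ℝ)))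
    (g : Fin n → Lp ℝ 2 (volume : Measure (Fin n → ℝ)))
    (hdiv : ∑ k : Fin n, R k (g k) = 0)
    (h0 : f0 = φp + φm)
    (hv : ∀ k : Fin n, fv k = -(R k φp) + R k φm + g k) :
    ‖f0‖ ^ 2 + ∑ k : Fin n, ‖fv k‖ ^ 2 =
      (‖φp‖ ^ 2 + ∑ k : Fin n, ‖R k φp‖ ^ 2) +
      (‖φm‖ ^ 2 + ∑ k : Fin n, ‖R k φm‖ ^ 2) +
      ∑ k : Fin n, ‖g k‖ ^ 2 := by
  have cross_p_m := sum_inner_apply_apply hskew hsq φp φm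
  have cross_p_g := sum_inner_apply_eq_zero hskew hdiv φp
  have cross_m_g := sum_inner_apply_eq_zero hskew hdiv φm
  simp only [h0, hv, norm_add_sq_real φp φm, norm_neg_add_add_sq_real, Finset.sum_add_distrib,
    Finset.sum_sub_distrib, ← Finset.mul_sum, cross_p_m, cross_p_g, cross_m_g]
  ring

/-- **Pythagorean identity for the Hardy–Hodge decomposition in `L²`.**
If `f = f⁺ + f⁻ + f⁰` is the Hardy–Hodge decomposition of a para-vector valued
`f ∈ L²(ℝⁿ, Cl(n,ℝ))` — written in components as `f_0 = φ⁺ + φ⁻`,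
`f_k = -R_k φ⁺ + R_k φ⁻ + f⁰_k` with `Σ_k R_k f⁰_k = 0`, where `f⁺ = (I+H)φ⁺` and
`f⁻ = (I−H)φ⁻` are boundary values of Hardy functions of the upper and lower
half-spaces — then `‖f‖² = ‖f⁺‖² + ‖f⁻‖² + ‖f⁰‖²`.  The Riesz transforms `R_k`
are commuting bounded operators on `L²` which are skew-adjoint and satisfy
`Σ_k R_k² = -I`. -/
theorem hardy_hodge_pythagoras (n : ℕ) (hn : 1 ≤ n)
    (R : Fin n →
      (Lp ℝ 2 (volume : Measure (Fin n → ℝ))) →L[ℝ]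
        (Lp ℝ 2 (volume : Measure (Fin n → ℝ))))
    (hcomm : ∀ j k : Fin n, ∀ g, R j (R k g) = R k (R j g))
    (hsq : ∀ g, ∑ k : Fin n, R k (R k g) = -g)
    (hskew : ∀ (k : Fin n) (g h : Lp ℝ 2 (volume : Measure (Fin n → ℝ))),
      ⟪R k g, h⟫ = -⟪g, R k h⟫)
    (f0 : Lp ℝ 2 (volume : Measure (Fin n → ℝ)))
    (fv : Fin n → Lp ℝ 2 (volume : Measure (Fin n → ℝ)))
    (φp φm : Lp ℝ 2 (volume : Measure (Fin n → ℝ)))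
    (g : Fin n → Lp ℝ 2 (volume : Measure (Fin n → ℝ)))
    (hdiv : ∑ k : Fin n, R k (g k) = 0)
    (h0 : f0 = φp + φm)
    (hv : ∀ k : Fin n, fv k = -(R k φp) + R k φm + g k) :
    ‖f0‖ ^ 2 + ∑ k : Fin n, ‖fv k‖ ^ 2 =
      (‖φp‖ ^ 2 + ∑ k : Fin n, ‖R k φp‖ ^ 2) +
      (‖φm‖ ^ 2 + ∑ k : Fin n, ‖R k φm‖ ^ 2) +
      ∑ k : Fin n, ‖g k‖ ^ 2 :=
  hardy_hodge_pythagoras_general n R hsq hskew f0 fv φp φm g hdiv h0 hv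
end

section
/- Orthogonality of Hardy and divergence-free parts: if f⁺ = (I+H)φ with scalar φ ∈ L²(ℝ^n) and f⁰ ∈ L²(ℝ^n, ℝ^n) is divergence free (Σ_k R_k f⁰_k = 0), then the real part of the L² inner product vanishes: ∫_{ℝ^n} (f⁺ \overline{f⁰} + f⁰ \overline{f⁺}) dx = 0, i.e., Sc ∫ f⁺ \overline{f⁰} dx = 0. -/
open MeasureTheory
open scoped RealInnerProductSpace

noncomputable def cliffordQ (n : ℕ) : QuadraticForm ℝ (Fin n → ℝ) :=
  QuadraticMap.weightedSumSquares ℝ (fun _ : Fin n => (-1 : ℝ))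

abbrev Cl (n : ℕ) := CliffordAlgebra (cliffordQ n)

noncomputable def cliffordE (n : ℕ) (k : Fin n) : Cl n :=
  CliffordAlgebra.ι (cliffordQ n) (Pi.single k 1)

/-!
Pointwise, for a paravector `a + v` and a vector `w` in the Clifford algebra of `-Σ xₖ²`,
`(a + v) w̄ + w (a + v)‾ = -(vw + wv) = 2 ⟨v, w⟩`: the scalar part `a` drops out and only the
vector parts pair. With `v = -Rφ` and `w = f⁰`, the integral is therefore `-2 Σₖ ⟪Rₖ φ, f⁰ₖ⟫`,
and skew-adjointness moves the Riesz transforms onto `f⁰`, giving `2 ⟪φ, Σₖ Rₖ f⁰ₖ⟫ = 0`.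
-/

namespace CliffordAlgebra

variable {R M : Type*} [CommRing R] [AddCommGroup M] [Module R M] {Q : QuadraticForm R M}

theorem algebraMap_add_ι_mul_involute_ι_add_swap (a : R) (v w : M) :
    (algebraMap R (CliffordAlgebra Q) a + ι Q v) * involute (ι Q w) +
        ι Q w * involute (algebraMap R _ a + ι Q v) =
      -algebraMap R _ (QuadraticMap.polar Q v w) := by
  rw [map_add, AlgHom.commutes, involute_ι, involute_ι, ← ι_mul_ι_add_swap]
  simp only [mul_add, add_mul, mul_neg, Algebra.commutes a (ι Q w)]
  abel

end CliffordAlgebra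

theorem sum_smul_cliffordE (n : ℕ) (v : Fin n → ℝ) :
    ∑ k : Fin n, v k • cliffordE n k = CliffordAlgebra.ι (cliffordQ n) v := by
  simp_rw [cliffordE, ← LinearMap.map_smul, ← map_sum, ← pi_eq_sum_univ']

theorem polar_cliffordQ (n : ℕ) (v w : Fin n → ℝ) :
    QuadraticMap.polar (cliffordQ n) v w = -2 * ∑ k : Fin n, v k * w k := by
  simp only [QuadraticMap.polar, cliffordQ, QuadraticMap.weightedSumSquares_apply,
    ← Finset.sum_sub_distrib, Finset.mul_sum, Pi.add_apply, smul_eq_mul]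
  refine Finset.sum_congr rfl fun k _ => ?_
  ring

theorem paravector_mul_involute_vector_add_swap (n : ℕ) (a : ℝ) (v w : Fin n → ℝ) :
    (algebraMap ℝ (Cl n) a + ∑ k : Fin n, v k • cliffordE n k) *
        CliffordAlgebra.involute (∑ k : Fin n, w k • cliffordE n k) +
      (∑ k : Fin n, w k • cliffordE n k) *
        CliffordAlgebra.involute (algebraMap ℝ (Cl n) a + ∑ k : Fin n, v k • cliffordE n k) =
      algebraMap ℝ (Cl n) (2 * ∑ k : Fin n, v k * w k) := by
  rw [sum_smul_cliffordE, sum_smul_cliffordE,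
    CliffordAlgebra.algebraMap_add_ι_mul_involute_ι_add_swap, polar_cliffordQ, ← map_neg]
  congr 1
  ring

theorem integral_sum_mul_eq_sum_inner {α ι : Type*} [MeasurableSpace α] {μ : Measure α}
    [Fintype ι] (f g : ι → Lp ℝ 2 μ) :
    ∫ x, ∑ k, (f k : α → ℝ) x * (g k : α → ℝ) x ∂μ = ∑ k, ⟪f k, g k⟫ := by
  have hint (k : ι) : Integrable (fun x => (f k : α → ℝ) x * (g k : α → ℝ) x) μ := by
    simpa only [Real.inner_apply] using L2.integrable_inner (𝕜 := ℝ) (f k) (g k)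
  simp only [integral_finsetSum _ fun k _ => hint k, L2.inner_def, Real.inner_apply]

theorem sum_inner_apply_eq_neg_inner_sum_s17 {E ι : Type*} [NormedAddCommGroup E]
    [InnerProductSpace ℝ E] [Fintype ι] (T : ι → E → E)
    (hskew : ∀ k g h, ⟪T k g, h⟫ = -⟪g, T k h⟫) (φ : E) (f : ι → E) :
    ∑ k, ⟪T k φ, f k⟫ = -⟪φ, ∑ k, T k (f k)⟫ := by
  rw [inner_sum, ← Finset.sum_neg_distrib]
  exact Finset.sum_congr rfl fun k _ => hskew k φ (f k)

theorem hardy_divfree_orthogonal_general (n : ℕ)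
    (R : Fin n →
      (Lp ℝ 2 (volume : Measure (Fin n → ℝ))) →L[ℝ]
        (Lp ℝ 2 (volume : Measure (Fin n → ℝ))))
    (hskew : ∀ (k : Fin n) (g h : Lp ℝ 2 (volume : Measure (Fin n → ℝ))),
      ⟪R k g, h⟫ = -⟪g, R k h⟫)
    (φ : Lp ℝ 2 (volume : Measure (Fin n → ℝ)))
    (f0 : Fin n → Lp ℝ 2 (volume : Measure (Fin n → ℝ)))
    (hdiv : ∑ k : Fin n, R k (f0 k) = 0) :
    ∀ ℓ : Cl n →ₗ[ℝ] ℝ,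
      ∫ x : Fin n → ℝ,
        ℓ ((algebraMap ℝ (Cl n) (φ x) +
              ∑ k : Fin n, (-(R k φ : (Fin n → ℝ) → ℝ) x) • cliffordE n k) *
            CliffordAlgebra.involute
              (∑ k : Fin n, ((f0 k : (Fin n → ℝ) → ℝ) x) • cliffordE n k) +
          (∑ k : Fin n, ((f0 k : (Fin n → ℝ) → ℝ) x) • cliffordE n k) *
            CliffordAlgebra.involute
              (algebraMap ℝ (Cl n) (φ x) +
                ∑ k : Fin n, (-(R k φ : (Fin n → ℝ) → ℝ) x) • cliffordE n k)) = 0 := by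
  intro ℓ
  have horth : ∑ k, ⟪R k φ, f0 k⟫ = 0 := by
    rw [sum_inner_apply_eq_neg_inner_sum_s17 (fun k => R k) hskew, hdiv, inner_zero_right, neg_zero]
  simp_rw [paravector_mul_involute_vector_add_swap, Algebra.algebraMap_eq_smul_one, map_smul,
    smul_eq_mul, neg_mul, Finset.sum_neg_distrib]
  rw [integral_mul_const, integral_const_mul, integral_neg, integral_sum_mul_eq_sum_inner, horth]
  simp

/-- **Orthogonality of the Hardy and divergence-free parts.**  If
`f⁺ = (I+H)φ` (scalar part `φ`, vector part `-R_k φ`) with scalar `φ ∈ L²(ℝⁿ)`, and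
`f⁰ = Σ_k f⁰_k e_k` is a divergence free (`Σ_k R_k f⁰_k = 0`) vector field in
`L²(ℝⁿ, ℝⁿ)`, then `∫ (f⁺ ⬝ conj(f⁰) + f⁰ ⬝ conj(f⁺)) dx = 0`, where conjugation
sends `e_S` to `(−1)^{|S|} e_S` (i.e. `involute`); the (Clifford-valued) integral
vanishes in the sense that every real linear functional of the integrand
integrates to zero.  The Riesz transforms `R_k` are commuting skew-adjoint
bounded operators on `L²` with `Σ_k R_k² = -I`. -/
theorem hardy_divfree_orthogonal (n : ℕ) (hn : 1 ≤ n)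
    (R : Fin n →
      (Lp ℝ 2 (volume : Measure (Fin n → ℝ))) →L[ℝ]
        (Lp ℝ 2 (volume : Measure (Fin n → ℝ))))
    (hcomm : ∀ j k : Fin n, ∀ g, R j (R k g) = R k (R j g))
    (hsq : ∀ g, ∑ k : Fin n, R k (R k g) = -g)
    (hskew : ∀ (k : Fin n) (g h : Lp ℝ 2 (volume : Measure (Fin n → ℝ))),
      ⟪R k g, h⟫ = -⟪g, R k h⟫)
    (φ : Lp ℝ 2 (volume : Measure (Fin n → ℝ)))
    (f0 : Fin n → Lp ℝ 2 (volume : Measure (Fin n → ℝ)))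
    (hdiv : ∑ k : Fin n, R k (f0 k) = 0) :
    ∀ ℓ : Cl n →ₗ[ℝ] ℝ,
      ∫ x : Fin n → ℝ,
        ℓ ((algebraMap ℝ (Cl n) (φ x) +
              ∑ k : Fin n, (-(R k φ : (Fin n → ℝ) → ℝ) x) • cliffordE n k) *
            CliffordAlgebra.involute
              (∑ k : Fin n, ((f0 k : (Fin n → ℝ) → ℝ) x) • cliffordE n k) +
          (∑ k : Fin n, ((f0 k : (Fin n → ℝ) → ℝ) x) • cliffordE n k) *
            CliffordAlgebra.involute
              (algebraMap ℝ (Cl n) (φ x) +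
                ∑ k : Fin n, (-(R k φ : (Fin n → ℝ) → ℝ) x) • cliffordE n k)) = 0 :=
  hardy_divfree_orthogonal_general n R hskew φ f0 hdiv
end
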